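/- Discrete divergence expressions lie in the kernel of the discrete Euler operator: let p, q be natural numbers, Δx, Δt > 0, and let g, h : ((Fin (p+1) × Fin (q+1)) → ℝ) → ℝ be differentiable functions that depend, respectively, only on the entries with first index in Fin p (for g, viewed through both the original window and the window shifted by one in the first index) and only on the entries with second index in Fin q (for h, through the original and a shift by one in the second index). Define f : ((Fin (p+1) × Fin (q+1)) → ℝ) → ℝ by f(w) = [g(w shifted forward by 1 in the first index) − g(w)]/Δx + [h(w shifted forward by 1 in the second index) − h(w)]/Δt, so that for a grid function u : ℤ × ℤ → ℝ the grid expression P(u)(m,n) = f(W(m,n)), where W(m,n)(a,b) = u(m+a, n+b), is a discrete divergence D_m(g) + D_n(h). Then the discrete Euler operator annihilates P: for every grid function u : ℤ × ℤ → ℝ and every (m,n) ∈ ℤ × ℤ, the finite sum Σ_{(a,b) ∈ Fin(p+1) × Fin(q+1)} (∂f/∂w_{(a,b)})(W(m−a, n−b)) equals 0, where ∂f/∂w_{(a,b)} denotes the partial derivative of f with respect to the coordinate (a,b) (i.e. the Fréchet derivative of f applied to the corresponding standard basis vector). -/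
import Mathlib

/-! Auxiliary machinery for Kuperschmidt's theorem (discrete divergences lie in the
kernel of the discrete Euler operator). -/

noncomputable def preCLM {ι κ : Type*} [Fintype ι] (s : κ → ι) :
    (ι → ℝ) →L[ℝ] (κ → ℝ) :=
  LinearMap.toContinuousLinearMap (LinearMap.funLeft ℝ ℝ s)

@[simp] lemma preCLM_apply {ι κ : Type*} [Fintype ι] (s : κ → ι)
    (w : ι → ℝ) (d : κ) : preCLM s w d = w (s d) := rfl

noncomputable def projCLM {ι : Type*} [Fintype ι] (P : ι → Prop) [DecidablePred P] :
    (ι → ℝ) →L[ℝ] (ι → ℝ) :=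
  LinearMap.toContinuousLinearMap
    { toFun := fun w i => if P i then w i else 0
      map_add' := by intro x y; funext i; by_cases h : P i <;> simp [h]
      map_smul' := by intro c x; funext i; by_cases h : P i <;> simp [h] }

@[simp] lemma projCLM_apply {ι : Type*} [Fintype ι] (P : ι → Prop) [DecidablePred P]
    (w : ι → ℝ) (i : ι) : projCLM P w i = if P i then w i else 0 := rfl

lemma fderiv_comp_clm {E F : Type*} [NormedAddCommGroup E] [NormedSpace ℝ E]
    [NormedAddCommGroup F] [NormedSpace ℝ F]
    (g : F → ℝ) (hg : Differentiable ℝ g) (T : E →L[ℝ] F) (x v : E) :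
    fderiv ℝ (fun w => g (T w)) x v = fderiv ℝ g (T x) (T v) := by
  have h1 : HasFDerivAt (fun w => g (T w)) ((fderiv ℝ g (T x)).comp T) x :=
    (hg (T x)).hasFDerivAt.comp x T.hasFDerivAt
  rw [h1.fderiv]; rfl

lemma fderiv_proj {ι : Type*} [Fintype ι] (P : ι → Prop) [DecidablePred P]
    (g : (ι → ℝ) → ℝ) (hg : Differentiable ℝ g)
    (hdep : ∀ x, g (projCLM P x) = g x) (x v : ι → ℝ) :
    fderiv ℝ g x v = fderiv ℝ g (projCLM P x) (projCLM P v) := by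
  have h1 := fderiv_comp_clm g hg (projCLM P) x v
  have h2 : (fun w => g (projCLM P w)) = g := funext hdep
  rw [h2] at h1
  exact h1

lemma kuper_telescope (k : ℕ) (β : Type*) [Fintype β] [DecidableEq β]
    (g : ((Fin (k+1) × β) → ℝ) → ℝ) (hg : Differentiable ℝ g)
    (hdep : ∀ w w' : (Fin (k+1) × β) → ℝ,
      (∀ a : Fin (k+1), ∀ b : β, (a:ℕ) < k → w (a,b) = w' (a,b)) → g w = g w')
    (W : Fin (k+1) × β → ((Fin (k+1) × β) → ℝ))
    (hW : ∀ (a : Fin k) (b : β) (d : Fin (k+1) × β) (hd : (d.1:ℕ) < k),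
      W (a.succ, b) (⟨(d.1:ℕ)+1, by omega⟩, d.2) = W (a.castSucc, b) d) :
    ∑ c : Fin (k+1) × β,
      (fderiv ℝ g (preCLM (fun d : Fin (k+1) × β =>
          ((⟨min ((d.1:ℕ)+1) k, Nat.lt_succ_of_le (min_le_right _ _)⟩ : Fin (k+1)), d.2)) (W c))
        (preCLM (fun d : Fin (k+1) × β =>
          ((⟨min ((d.1:ℕ)+1) k, Nat.lt_succ_of_le (min_le_right _ _)⟩ : Fin (k+1)), d.2))
          (Pi.single c 1))
       - fderiv ℝ g (W c) (Pi.single c 1)) = 0 := by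
  classical
  set σ : ((Fin (k+1) × β) → ℝ) →L[ℝ] ((Fin (k+1) × β) → ℝ) :=
    preCLM (fun d : Fin (k+1) × β =>
      ((⟨min ((d.1:ℕ)+1) k, Nat.lt_succ_of_le (min_le_right _ _)⟩ : Fin (k+1)), d.2)) with hσ
  set P : Fin (k+1) × β → Prop := fun i => (i.1:ℕ) < k with hP
  have hproj : ∀ x, g (projCLM P x) = g x := by
    intro x
    refine hdep _ _ fun a b hab => ?_
    simp [hP, hab]
  have key : ∀ x v, fderiv ℝ g x v = fderiv ℝ g (projCLM P x) (projCLM P v) :=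
    fderiv_proj P g hg hproj
  set F : Fin (k+1) × β → ℝ :=
    fun c => fderiv ℝ g (projCLM P (W c)) (projCLM P (Pi.single c 1)) with hF
  have step1 : ∑ c : Fin (k+1) × β,
      (fderiv ℝ g (σ (W c)) (σ (Pi.single c 1)) - fderiv ℝ g (W c) (Pi.single c 1))
      = ∑ c : Fin (k+1) × β,
        (fderiv ℝ g (projCLM P (σ (W c))) (projCLM P (σ (Pi.single c 1))) - F c) := by
    refine Finset.sum_congr rfl fun c _ => ?_
    rw [key (σ (W c)) (σ (Pi.single c 1)), key (W c) (Pi.single c 1)]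
  rw [step1, Finset.sum_sub_distrib]
  rw [Fintype.sum_prod_type, Fintype.sum_prod_type]
  have hA0 : ∀ b : β, fderiv ℝ g (projCLM P (σ (W (0, b))))
      (projCLM P (σ (Pi.single (0, b) 1))) = 0 := by
    intro b
    have hz : projCLM P (σ (Pi.single ((0 : Fin (k+1)), b) 1)) = 0 := by
      funext d
      by_cases hd : (d.1:ℕ) < k
      · simp only [projCLM_apply, hP, hd, if_true, hσ, preCLM_apply, Pi.zero_apply]
        apply Pi.single_eq_of_ne
        intro hcon
        have := congrArg (fun z => ((z.1 : Fin (k+1)) : ℕ)) hcon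
        simp at this
        omega
      · simp [hP, hd]
    rw [hz, map_zero]
  have hAsucc : ∀ (a : Fin k) (b : β),
      fderiv ℝ g (projCLM P (σ (W (a.succ, b)))) (projCLM P (σ (Pi.single (a.succ, b) 1)))
      = F (a.castSucc, b) := by
    intro a b
    have hpt : projCLM P (σ (W (a.succ, b))) = projCLM P (W (a.castSucc, b)) := by
      funext d
      by_cases hd : (d.1:ℕ) < k
      · simp only [projCLM_apply, hP, hd, if_true, hσ, preCLM_apply]
        have hmk : (⟨min ((d.1:ℕ)+1) k, Nat.lt_succ_of_le (min_le_right _ _)⟩ : Fin (k+1))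
            = ⟨(d.1:ℕ)+1, by omega⟩ := by
          apply Fin.ext; simp; omega
        rw [hmk]
        exact hW a b d hd
      · simp [hP, hd]
    have hvec : projCLM P (σ (Pi.single (a.succ, b) 1))
        = projCLM P (Pi.single (a.castSucc, b) 1) := by
      funext d
      by_cases hd : (d.1:ℕ) < k
      · simp only [projCLM_apply, hP, hd, if_true, hσ, preCLM_apply]
        rw [Pi.single_apply, Pi.single_apply]
        refine if_congr ?_ rfl rfl
        constructor
        · rintro h
          have h1 := congrArg (fun z => ((z.1 : Fin (k+1)) : ℕ)) h
          have h2 := congrArg Prod.snd h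
          simp [Fin.val_succ] at h1 h2
          refine Prod.ext ?_ h2
          apply Fin.ext
          simp [Fin.coe_castSucc]
          omega
        · rintro h
          have h1 := congrArg (fun z => ((z.1 : Fin (k+1)) : ℕ)) h
          have h2 := congrArg Prod.snd h
          simp [Fin.coe_castSucc] at h1 h2
          refine Prod.ext ?_ h2
          apply Fin.ext
          simp [Fin.val_succ]
          omega
      · simp [hP, hd]
    rw [hpt, hvec]
  have hFlast : ∀ b : β, F (Fin.last k, b) = 0 := by
    intro b
    have hz : projCLM P (Pi.single ((Fin.last k : Fin (k+1)), b) 1) = 0 := by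
      funext d
      by_cases hd : (d.1:ℕ) < k
      · simp only [projCLM_apply, hP, hd, if_true, Pi.zero_apply]
        apply Pi.single_eq_of_ne
        intro hcon
        have := congrArg (fun z => ((z.1 : Fin (k+1)) : ℕ)) hcon
        simp [Fin.val_last] at this
        omega
      · simp [hP, hd]
    rw [hF]
    simp only []
    rw [hz, map_zero]
  rw [Fin.sum_univ_succ, Fin.sum_univ_castSucc]
  simp only [hA0, hAsucc, hFlast]
  simp


/-- Kuperschmidt's inclusion: every discrete divergence expression lies in the kernel
of the discrete Euler operator. Here `g` and `h` are the flux and density stencil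
functions, depending only on the entries of the window with first index in `Fin p`
(for `g`) resp. second index in `Fin q` (for `h`); `f` is the resulting discrete
divergence stencil `D_m(g) + D_n(h)` (the shift is clamped at the boundary of the
window, which is immaterial thanks to the dependence restrictions). The discrete
Euler operator applied to the grid expression `P(u)(m,n) = f(W(m,n))`, where
`W(m,n)(a,b) = u(m+a, n+b)`, vanishes identically. -/
theorem discrete_divergence_in_kernel_of_euler
    (p q : ℕ) (dx dt : ℝ) (hdx : 0 < dx) (hdt : 0 < dt)
    (g h : ((Fin (p + 1) × Fin (q + 1)) → ℝ) → ℝ)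
    (hg : Differentiable ℝ g) (hh : Differentiable ℝ h)
    (hgdep : ∀ w w' : (Fin (p + 1) × Fin (q + 1)) → ℝ,
      (∀ a : Fin (p + 1), ∀ b : Fin (q + 1), (a : ℕ) < p → w (a, b) = w' (a, b)) →
      g w = g w')
    (hhdep : ∀ w w' : (Fin (p + 1) × Fin (q + 1)) → ℝ,
      (∀ a : Fin (p + 1), ∀ b : Fin (q + 1), (b : ℕ) < q → w (a, b) = w' (a, b)) →
      h w = h w')
    (f : ((Fin (p + 1) × Fin (q + 1)) → ℝ) → ℝ)
    (hf : ∀ w : (Fin (p + 1) × Fin (q + 1)) → ℝ,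
      f w =
        (g (fun c => w (⟨min ((c.1 : ℕ) + 1) p,
              Nat.lt_succ_of_le (min_le_right _ _)⟩, c.2)) - g w) / dx
        + (h (fun c => w (c.1, ⟨min ((c.2 : ℕ) + 1) q,
              Nat.lt_succ_of_le (min_le_right _ _)⟩)) - h w) / dt) :
    ∀ u : ℤ × ℤ → ℝ, ∀ m n : ℤ,
      ∑ c : Fin (p + 1) × Fin (q + 1),
        fderiv ℝ f
          (fun d : Fin (p + 1) × Fin (q + 1) =>
            u (m - ((c.1 : ℕ) : ℤ) + ((d.1 : ℕ) : ℤ),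
               n - ((c.2 : ℕ) : ℤ) + ((d.2 : ℕ) : ℤ)))
          (Pi.single c 1) = 0 := by
  intro u m n
  classical
  set σ1 := preCLM (fun d : Fin (p+1) × Fin (q+1) =>
      ((⟨min ((d.1:ℕ)+1) p, Nat.lt_succ_of_le (min_le_right _ _)⟩ : Fin (p+1)), d.2)) with hσ1
  set σ2 := preCLM (fun d : Fin (p+1) × Fin (q+1) =>
      (d.1, (⟨min ((d.2:ℕ)+1) q, Nat.lt_succ_of_le (min_le_right _ _)⟩ : Fin (q+1)))) with hσ2
  -- the window family
  set W : Fin (p+1) × Fin (q+1) → (Fin (p+1) × Fin (q+1) → ℝ) :=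
    fun c => fun d : Fin (p+1) × Fin (q+1) =>
      u (m - ((c.1 : ℕ) : ℤ) + ((d.1 : ℕ) : ℤ), n - ((c.2 : ℕ) : ℤ) + ((d.2 : ℕ) : ℤ)) with hWdef
  -- derivative formula for f
  have hdf : ∀ x v : (Fin (p+1) × Fin (q+1)) → ℝ, fderiv ℝ f x v =
      (fderiv ℝ g (σ1 x) (σ1 v) - fderiv ℝ g x v) / dx
      + (fderiv ℝ h (σ2 x) (σ2 v) - fderiv ℝ h x v) / dt := by
    intro x v
    have hfe : f = fun w => (1/dx) • (g (σ1 w) - g w) + (1/dt) • (h (σ2 w) - h w) := by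
      funext w; rw [hf w]
      have e1 : (fun c : Fin (p+1) × Fin (q+1) => w (⟨min ((c.1:ℕ)+1) p,
          Nat.lt_succ_of_le (min_le_right _ _)⟩, c.2)) = σ1 w := rfl
      have e2 : (fun c : Fin (p+1) × Fin (q+1) => w (c.1, ⟨min ((c.2:ℕ)+1) q,
          Nat.lt_succ_of_le (min_le_right _ _)⟩)) = σ2 w := rfl
      rw [e1, e2, smul_eq_mul, smul_eq_mul]; ring
    have H1 : HasFDerivAt (fun w => g (σ1 w)) ((fderiv ℝ g (σ1 x)).comp σ1) x :=
      (hg _).hasFDerivAt.comp x σ1.hasFDerivAt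
    have H2 : HasFDerivAt (fun w => h (σ2 w)) ((fderiv ℝ h (σ2 x)).comp σ2) x :=
      (hh _).hasFDerivAt.comp x σ2.hasFDerivAt
    have H : HasFDerivAt f
        (((1/dx) • (((fderiv ℝ g (σ1 x)).comp σ1) - fderiv ℝ g x))
         + ((1/dt) • (((fderiv ℝ h (σ2 x)).comp σ2) - fderiv ℝ h x))) x := by
      rw [hfe]
      exact ((H1.sub (hg x).hasFDerivAt).const_smul (1/dx)).add
        ((H2.sub (hh x).hasFDerivAt).const_smul (1/dt))
    rw [H.fderiv]
    simp only [ContinuousLinearMap.add_apply, ContinuousLinearMap.smul_apply,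
      ContinuousLinearMap.sub_apply, ContinuousLinearMap.coe_comp', Function.comp_apply,
      smul_eq_mul]
    ring
  -- g part vanishes
  have Sg : ∑ c : Fin (p+1) × Fin (q+1),
      (fderiv ℝ g (σ1 (W c)) (σ1 (Pi.single c 1)) - fderiv ℝ g (W c) (Pi.single c 1)) = 0 := by
    refine kuper_telescope p (Fin (q+1)) g hg hgdep W ?_
    intro a b d hd
    show u (m - (((a.succ : Fin (p+1)) : ℕ) : ℤ) + ((((d.1:ℕ)+1 : ℕ)) : ℤ),
            n - ((b:ℕ):ℤ) + ((d.2:ℕ):ℤ))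
       = u (m - (((a.castSucc : Fin (p+1)) : ℕ) : ℤ) + ((d.1:ℕ):ℤ),
            n - ((b:ℕ):ℤ) + ((d.2:ℕ):ℤ))
    have e1 : m - (((a.succ : Fin (p+1)) : ℕ) : ℤ) + ((((d.1:ℕ)+1 : ℕ)) : ℤ)
        = m - (((a.castSucc : Fin (p+1)) : ℕ) : ℤ) + ((d.1:ℕ):ℤ) := by
      simp only [Fin.val_succ, Fin.coe_castSucc]
      push_cast
      ring
    rw [e1]
  -- h part vanishes, via swapping the two factors
  have Sh : ∑ c : Fin (p+1) × Fin (q+1),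
      (fderiv ℝ h (σ2 (W c)) (σ2 (Pi.single c 1)) - fderiv ℝ h (W c) (Pi.single c 1)) = 0 := by
    set R : ((Fin (p+1) × Fin (q+1)) → ℝ) →L[ℝ] ((Fin (q+1) × Fin (p+1)) → ℝ) :=
      preCLM (Prod.swap : Fin (q+1) × Fin (p+1) → Fin (p+1) × Fin (q+1)) with hR
    set R' : ((Fin (q+1) × Fin (p+1)) → ℝ) →L[ℝ] ((Fin (p+1) × Fin (q+1)) → ℝ) :=
      preCLM (Prod.swap : Fin (p+1) × Fin (q+1) → Fin (q+1) × Fin (p+1)) with hR'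
    set h' : ((Fin (q+1) × Fin (p+1)) → ℝ) → ℝ := fun v => h (R' v) with hh'def
    have hh' : Differentiable ℝ h' := hh.comp R'.differentiable
    have hcomp : (fun x : (Fin (p+1) × Fin (q+1)) → ℝ => h' (R x)) = h := by
      funext x
      show h (R' (R x)) = h x
      congr 1
    have hkey : ∀ x v : (Fin (p+1) × Fin (q+1)) → ℝ,
        fderiv ℝ h x v = fderiv ℝ h' (R x) (R v) := by
      intro x v
      have := fderiv_comp_clm h' hh' R x v
      rw [hcomp] at this
      exact this
    set σ1' := preCLM (fun d : Fin (q+1) × Fin (p+1) =>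
        ((⟨min ((d.1:ℕ)+1) q, Nat.lt_succ_of_le (min_le_right _ _)⟩ : Fin (q+1)), d.2)) with hσ1'
    have hRσ : ∀ x : (Fin (p+1) × Fin (q+1)) → ℝ, R (σ2 x) = σ1' (R x) := by
      intro x
      funext d
      rfl
    have hRsingle : ∀ c : Fin (p+1) × Fin (q+1),
        R (Pi.single c (1:ℝ)) = Pi.single (Prod.swap c) 1 := by
      intro c
      funext d
      simp only [hR, preCLM_apply, Pi.single_apply]
      refine if_congr ?_ rfl rfl
      constructor
      · intro hcon; rw [← hcon, Prod.swap_swap]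
      · intro hcon; rw [hcon, Prod.swap_swap]
    set W' : Fin (q+1) × Fin (p+1) → (Fin (q+1) × Fin (p+1) → ℝ) :=
      fun c' => R (W (Prod.swap c')) with hW'def
    have step : ∀ c : Fin (p+1) × Fin (q+1),
        fderiv ℝ h (σ2 (W c)) (σ2 (Pi.single c 1)) - fderiv ℝ h (W c) (Pi.single c 1)
        = fderiv ℝ h' (σ1' (W' (Prod.swap c))) (σ1' (Pi.single (Prod.swap c) 1))
          - fderiv ℝ h' (W' (Prod.swap c)) (Pi.single (Prod.swap c) 1) := by
      intro c
      rw [hkey (σ2 (W c)) (σ2 (Pi.single c 1)), hkey (W c) (Pi.single c 1)]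
      rw [hRσ, hRσ, hRsingle]
      have hWW : R (W c) = W' (Prod.swap c) := by
        rw [hW'def]
        simp only [Prod.swap_swap]
      rw [hWW]
    calc ∑ c : Fin (p+1) × Fin (q+1),
          (fderiv ℝ h (σ2 (W c)) (σ2 (Pi.single c 1)) - fderiv ℝ h (W c) (Pi.single c 1))
        = ∑ c' : Fin (q+1) × Fin (p+1),
          (fderiv ℝ h' (σ1' (W' c')) (σ1' (Pi.single c' 1))
            - fderiv ℝ h' (W' c') (Pi.single c' 1)) := by
          refine Fintype.sum_equiv (Equiv.prodComm (Fin (p+1)) (Fin (q+1))) _ _ ?_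
          intro c
          exact step c
      _ = 0 := by
          refine kuper_telescope q (Fin (p+1)) h' hh' ?_ W' ?_
          · intro v v' hvv
            show h (R' v) = h (R' v')
            refine hhdep _ _ fun a b hb => ?_
            show v (Prod.swap (a, b)) = v' (Prod.swap (a, b))
            exact hvv b a hb
          · intro a b d hd
            show u (m - ((b:ℕ):ℤ) + ((d.2:ℕ):ℤ),
                    n - (((a.succ : Fin (q+1)) : ℕ) : ℤ) + ((((d.1:ℕ)+1 : ℕ)) : ℤ))
               = u (m - ((b:ℕ):ℤ) + ((d.2:ℕ):ℤ),
                    n - (((a.castSucc : Fin (q+1)) : ℕ) : ℤ) + ((d.1:ℕ):ℤ))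
            have e1 : n - (((a.succ : Fin (q+1)) : ℕ) : ℤ) + ((((d.1:ℕ)+1 : ℕ)) : ℤ)
                = n - (((a.castSucc : Fin (q+1)) : ℕ) : ℤ) + ((d.1:ℕ):ℤ) := by
              simp only [Fin.val_succ, Fin.coe_castSucc]
              push_cast
              ring
            rw [e1]
  -- put everything together
  calc ∑ c : Fin (p+1) × Fin (q+1),
        fderiv ℝ f (W c) (Pi.single c 1)
      = ∑ c : Fin (p+1) × Fin (q+1),
        ((fderiv ℝ g (σ1 (W c)) (σ1 (Pi.single c 1)) - fderiv ℝ g (W c) (Pi.single c 1)) / dx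
         + (fderiv ℝ h (σ2 (W c)) (σ2 (Pi.single c 1)) - fderiv ℝ h (W c) (Pi.single c 1)) / dt) :=
        Finset.sum_congr rfl fun c _ => hdf (W c) (Pi.single c 1)
    _ = (∑ c : Fin (p+1) × Fin (q+1),
          (fderiv ℝ g (σ1 (W c)) (σ1 (Pi.single c 1)) - fderiv ℝ g (W c) (Pi.single c 1))) / dx
        + (∑ c : Fin (p+1) × Fin (q+1),
          (fderiv ℝ h (σ2 (W c)) (σ2 (Pi.single c 1)) - fderiv ℝ h (W c) (Pi.single c 1))) / dt := by
        rw [Finset.sum_add_distrib, Finset.sum_div, Finset.sum_div]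
    _ = 0 := by rw [Sg, Sh]; simp
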